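/- arXiv:2604.03125 — 2 statements merged into one kernel-verified Lean document; each statement's English description precedes it below -/
import Mathlib

section
/- Let Y be a càdlàg function with Y(0) < 0, τ = inf{t : Y(t) ≥ 0}, and suppose the no-premature-left-contact condition holds: sup_{0≤s≤t} Y(s) < 0 for every finite t < τ. Suppose τ < ∞ and Y(τ−) = 0. Define σ_n = inf{t ≥ 0 : sup_{0≤s≤t} Y(s) ≥ −1/n}. Then σ_n < τ for all sufficiently large n, and σ_n ↑ τ as n → ∞. -/
open Filter Set Topology

/-- (Theorem 2.10, left-contact case.) Under the
no-premature-left-contact condition, on the left-contact event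
(`τ < ∞` and `Y(τ−) = 0`), the canonical times
`σ_n = inf {t ≥ 0 : sup_{0 ≤ s ≤ t} Y s ≥ -1/n}` are eventually strictly
smaller than `τ`, are nondecreasing in `n`, and increase to `τ`. -/
theorem stmt6 (Y : ℝ → ℝ) (τ : ℝ)
    (hY0 : Y 0 < 0)
    (hrc : ∀ s : ℝ, 0 ≤ s → Tendsto Y (nhdsWithin s (Set.Ici s)) (nhds (Y s)))
    (hne : {t : ℝ | 0 ≤ t ∧ 0 ≤ Y t}.Nonempty)
    (hτ : IsGLB {t : ℝ | 0 ≤ t ∧ 0 ≤ Y t} τ)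
    (hτpos : 0 < τ)
    (hnp : ∀ t : ℝ, 0 ≤ t → t < τ → sSup (Y '' Set.Icc 0 t) < 0)
    (hlc : Tendsto Y (nhdsWithin τ (Set.Iio τ)) (nhds 0)) :
    (∀ n : ℕ, 1 ≤ n →
      sInf {t : ℝ | 0 ≤ t ∧ -(1 / (n : ℝ)) ≤ sSup (Y '' Set.Icc 0 t)} ≤
      sInf {t : ℝ | 0 ≤ t ∧ -(1 / ((n + 1 : ℕ) : ℝ)) ≤ sSup (Y '' Set.Icc 0 t)}) ∧
    (∃ N : ℕ, ∀ n : ℕ, N ≤ n →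
      sInf {t : ℝ | 0 ≤ t ∧ -(1 / (n : ℝ)) ≤ sSup (Y '' Set.Icc 0 t)} < τ) ∧
    Tendsto (fun n : ℕ =>
      sInf {t : ℝ | 0 ≤ t ∧ -(1 / (n : ℝ)) ≤ sSup (Y '' Set.Icc 0 t)})
      atTop (nhds τ) := by
  set A : ℝ → Set ℝ := fun ε => {t : ℝ | 0 ≤ t ∧ -ε ≤ sSup (Y '' Set.Icc 0 t)} with hA
  have hbddA : ∀ ε, BddBelow (A ε) := fun ε => ⟨0, fun t ht => ht.1⟩
  have hbddS : ∀ t : ℝ, 0 ≤ t → t < τ → BddAbove (Y '' Set.Icc 0 t) := by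
    intro t ht htτ
    by_contra h
    have h0 := Real.sSup_of_not_bddAbove h
    have h1 := hnp t ht htτ
    rw [h0] at h1
    exact lt_irrefl 0 h1
  have hSmono : ∀ t u : ℝ, 0 ≤ t → t ≤ u → u < τ →
      sSup (Y '' Set.Icc 0 t) ≤ sSup (Y '' Set.Icc 0 u) := by
    intro t u ht htu huτ
    refine csSup_le_csSup (hbddS u (ht.trans htu) huτ) ⟨Y t, ⟨t, ⟨ht, le_rfl⟩, rfl⟩⟩ ?_
    exact Set.image_mono (Set.Icc_subset_Icc_right htu)
  have hex : ∀ ε : ℝ, 0 < ε → ∃ t, 0 ≤ t ∧ t < τ ∧ t ∈ A ε := by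
    intro ε hε
    have h1 : ∀ᶠ s in nhdsWithin τ (Set.Iio τ), -ε < Y s :=
      hlc (Ioi_mem_nhds (by linarith))
    have h2 : ∀ᶠ s in nhdsWithin τ (Set.Iio τ), 0 < s :=
      eventually_nhdsWithin_of_eventually_nhds (eventually_gt_nhds hτpos)
    have h3 : ∀ᶠ s in nhdsWithin τ (Set.Iio τ), s < τ :=
      eventually_mem_nhdsWithin.mono fun s hs => hs
    obtain ⟨t, ht1, ht2, ht3⟩ := (h1.and (h2.and h3)).exists
    refine ⟨t, ht2.le, ht3, ht2.le, ?_⟩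
    have hle : Y t ≤ sSup (Y '' Set.Icc 0 t) :=
      le_csSup (hbddS t ht2.le ht3) ⟨t, ⟨ht2.le, le_rfl⟩, rfl⟩
    linarith
  have hAne : ∀ ε : ℝ, 0 < ε → (A ε).Nonempty := fun ε hε =>
    let ⟨t, _, _, htA⟩ := hex ε hε; ⟨t, htA⟩
  have hlt : ∀ ε : ℝ, 0 < ε → sInf (A ε) < τ := by
    intro ε hε
    obtain ⟨t, _, htτ, htA⟩ := hex ε hε
    exact lt_of_le_of_lt (csInf_le (hbddA ε) htA) htτ
  have hnn : ∀ ε : ℝ, 0 < ε → 0 ≤ sInf (A ε) := fun ε hε =>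
    le_csInf (hAne ε hε) fun t ht => ht.1
  have hlow : ∀ ε u : ℝ, 0 < ε → 0 ≤ u → u < τ →
      sSup (Y '' Set.Icc 0 u) < -ε → u ≤ sInf (A ε) := by
    intro ε u hε hu huτ hSu
    refine le_csInf (hAne ε hε) fun t ht => ?_
    by_contra h
    push_neg at h
    have h1 := hSmono t u ht.1 h.le huτ
    have h2 := ht.2
    linarith
  refine ⟨?_, ⟨1, fun n hn => ?_⟩, ?_⟩
  · intro n hn
    have hn0 : (0:ℝ) < n := by exact_mod_cast hn
    have hne' : (A (1/((n+1:ℕ):ℝ))).Nonempty := by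
      apply hAne; push_cast; positivity
    have hsub : A (1/((n+1:ℕ):ℝ)) ⊆ A (1/(n:ℝ)) := by
      intro t ht
      refine ⟨ht.1, le_trans ?_ ht.2⟩
      have h1 : 1/((n:ℝ)+1) ≤ 1/(n:ℝ) := by
        apply one_div_le_one_div_of_le hn0; linarith
      push_cast
      linarith
    exact csInf_le_csInf (hbddA _) hne' hsub
  · have hn0 : (0:ℝ) < n := by exact_mod_cast hn
    exact hlt (1/(n:ℝ)) (by positivity)
  · rw [tendsto_order]
    constructor
    · intro a ha
      rcases lt_or_ge a 0 with h0 | h0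
      · filter_upwards [eventually_ge_atTop 1] with n hn
        have hn0 : (0:ℝ) < n := by exact_mod_cast hn
        exact lt_of_lt_of_le h0 (hnn _ (by positivity))
      · obtain ⟨a', ha1, ha2⟩ := exists_between ha
        have ha'0 : 0 ≤ a' := le_of_lt (lt_of_le_of_lt h0 ha1)
        have hSa : sSup (Y '' Set.Icc 0 a') < 0 := hnp a' ha'0 ha2
        have hc0 : 0 < -(sSup (Y '' Set.Icc 0 a')) := by linarith
        obtain ⟨M, hM⟩ := exists_nat_gt (1 / (-(sSup (Y '' Set.Icc 0 a'))))
        filter_upwards [eventually_ge_atTop (max M 1)] with n hn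
        have hn1 : 1 ≤ n := le_trans (le_max_right M 1) hn
        have hnM : (M:ℝ) ≤ n := by exact_mod_cast le_trans (le_max_left M 1) hn
        have hn0 : (0:ℝ) < n := by exact_mod_cast hn1
        have h1c : 1 / (-(sSup (Y '' Set.Icc 0 a'))) < (n:ℝ) := lt_of_lt_of_le hM hnM
        have h1n : 1/(n:ℝ) < -(sSup (Y '' Set.Icc 0 a')) := by
          rw [div_lt_iff₀ hn0]
          have h2 := (div_lt_iff₀ hc0).mp h1c
          nlinarith
        have hstrict : sSup (Y '' Set.Icc 0 a') < -(1/(n:ℝ)) := by linarith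
        exact lt_of_lt_of_le ha1 (hlow (1/(n:ℝ)) a' (by positivity) ha'0 ha2 hstrict)
    · intro b hb
      filter_upwards [eventually_ge_atTop 1] with n hn
      have hn0 : (0:ℝ) < n := by exact_mod_cast hn
      exact lt_trans (hlt _ (by positivity)) hb
end

section
/- Let G : (−∞, a) → ℝ be twice continuously differentiable and satisfy G(a−) = 0 and the integro-differential equation (σ²/2)G''(x) + (α + βx)G'(x) + λ∫_x^a G(y) η e^{−η(y−x)} dy − (λ+q)G(x) + λ e^{−η(a−x)} = 0 for all x < a. Then G is three times differentiable and satisfies the third-order ODE (σ²/2)G'''(x) + (α + βx − ησ²/2)G''(x) + (β − η(α+βx) − λ − q)G'(x) + ηq G(x) = 0 for all x < a. -/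
/-!
Writing the kernel integral as `I(x) = η e^{ηx} ∫ₓᵃ G(y) e^{-ηy} dy` gives `I' = ηI - ηG`; the
integral makes sense because `G(a⁻) = 0` lets `G` extend continuously to `[x, a]`. Solving the
equation for `(σ²/2)G''` then shows that `G''` is differentiable, and subtracting `η` times the
equation from its derivative eliminates `I`, leaving the third-order ODE.
-/

open Filter Set Topology Real intervalIntegral

theorem intervalIntegrable_of_continuousOn_Ico_of_tendsto {E : Type*} [NormedAddCommGroup E]
    {f : ℝ → E} {x a : ℝ} {l : E} (hxa : x ≤ a) (hf : ContinuousOn f (Ico x a))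
    (hlim : Tendsto f (𝓝[<] a) (𝓝 l)) :
    IntervalIntegrable f MeasureTheory.volume x a := by
  classical
  have hcont : ContinuousOn (Function.update f a l) (Icc x a) := by
    rw [continuousOn_update_iff, Icc_sdiff_right]
    exact ⟨hf, fun _ => hlim.mono_left (nhdsWithin_mono _ Ico_subset_Iio_self)⟩
  refine (hcont.intervalIntegrable_of_Icc hxa).congr_uIoo fun y hy => ?_
  rw [uIoo_of_le hxa] at hy
  exact Function.update_of_ne hy.2.ne _ _

theorem integral_mul_exp_neg_mul_sub (g : ℝ → ℝ) (η a x : ℝ) :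
    ∫ y in x..a, g y * (η * exp (-(η * (y - x)))) =
      η * exp (η * x) * ∫ y in x..a, g y * exp (-(η * y)) := by
  rw [← integral_const_mul]
  congr 1 with y
  rw [show -(η * (y - x)) = η * x + -(η * y) by ring, exp_add]
  ring

theorem hasDerivAt_integral_mul_exp_neg_mul_sub {g : ℝ → ℝ} {η a x : ℝ}
    (hg : ContinuousOn g (Iio a)) (hint : IntervalIntegrable g MeasureTheory.volume x a)
    (hx : x < a) :
    HasDerivAt (fun x => ∫ y in x..a, g y * (η * exp (-(η * (y - x)))))
      (η * (∫ y in x..a, g y * (η * exp (-(η * (y - x))))) - η * g x) x := by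
  have hge : ContinuousOn (fun y => g y * exp (-(η * y))) (Iio a) :=
    hg.mul (by fun_prop)
  have hJ : HasDerivAt (fun x => ∫ y in x..a, g y * exp (-(η * y)))
      (-(g x * exp (-(η * x)))) x :=
    integral_hasDerivAt_left (hint.mul_continuousOn (by fun_prop))
      (hge.stronglyMeasurableAtFilter isOpen_Iio x hx)
      (hge.continuousAt (Iio_mem_nhds hx))
  have hE : HasDerivAt (fun x => η * exp (η * x)) (η * (exp (η * x) * η)) x := by
    simpa using ((hasDerivAt_id x).const_mul η).exp.const_mul η
  simp only [integral_mul_exp_neg_mul_sub g η a]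
  refine (hE.mul hJ).congr_deriv ?_
  have : exp (η * x) * exp (-(η * x)) = 1 := by rw [← exp_add]; simp
  linear_combination (-(η * g x)) * this

theorem stmt16_general (σ α β lam η q a : ℝ)
    (hσ : 0 < σ)
    (G G' G'' : ℝ → ℝ)
    (hG : ∀ x < a, HasDerivAt G (G' x) x)
    (hG' : ∀ x < a, HasDerivAt G' (G'' x) x)
    (hbd : Tendsto G (nhdsWithin a (Set.Iio a)) (nhds 0))
    (heq : ∀ x < a,
      σ ^ 2 / 2 * G'' x + (α + β * x) * G' x
        + lam * (∫ y in x..a, G y * (η * Real.exp (-(η * (y - x)))))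
        - (lam + q) * G x + lam * Real.exp (-(η * (a - x))) = 0) :
    ∃ G''' : ℝ → ℝ, (∀ x < a, HasDerivAt G'' (G''' x) x) ∧
      ∀ x < a,
        σ ^ 2 / 2 * G''' x + (α + β * x - η * σ ^ 2 / 2) * G'' x
          + (β - η * (α + β * x) - lam - q) * G' x + η * q * G x = 0 := by
  set I : ℝ → ℝ := fun x => ∫ y in x..a, G y * (η * exp (-(η * (y - x))))
  have hGc : ContinuousOn G (Iio a) := fun x hx => (hG x hx).continuousAt.continuousWithinAt
  have hI : ∀ x < a, HasDerivAt I (η * I x - η * G x) x := fun x hx =>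
    hasDerivAt_integral_mul_exp_neg_mul_sub hGc
      (intervalIntegrable_of_continuousOn_Ico_of_tendsto hx.le
        (hGc.mono Ico_subset_Iio_self) hbd) hx
  have hE : ∀ x, HasDerivAt (fun x => exp (-(η * (a - x)))) (η * exp (-(η * (a - x)))) x := by
    intro x
    convert (((hasDerivAt_id' x).const_sub a).const_mul η).fun_neg.exp using 1
    ring
  set Φ : ℝ → ℝ := fun x =>
    (lam + q) * G x - (α + β * x) * G' x - lam * I x - lam * exp (-(η * (a - x)))
  set Φ' : ℝ → ℝ := fun x =>
    (lam + q) * G' x - (β * G' x + (α + β * x) * G'' x) - lam * (η * I x - η * G x)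
      - lam * (η * exp (-(η * (a - x))))
  have hΦ : ∀ x < a, HasDerivAt Φ (Φ' x) x := by
    intro x hx
    have hlin : HasDerivAt (fun x => α + β * x) β x := by
      simpa using ((hasDerivAt_id x).const_mul β).const_add α
    exact ((((hG x hx).const_mul _).sub (hlin.mul (hG' x hx))).sub
      ((hI x hx).const_mul lam)).sub ((hE x).const_mul lam)
  have hσ2 : σ ^ 2 / 2 ≠ 0 := by positivity
  have hG''Φ : ∀ x < a, G'' x = (σ ^ 2 / 2)⁻¹ * Φ x := by
    intro x hx
    rw [eq_inv_mul_iff_mul_eq₀ hσ2]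
    linear_combination heq x hx
  have hG''' : ∀ x < a, HasDerivAt G'' ((σ ^ 2 / 2)⁻¹ * Φ' x) x := fun x hx =>
    ((hΦ x hx).const_mul _).congr_of_eventuallyEq <|
      eventually_of_mem (Iio_mem_nhds hx) hG''Φ
  refine ⟨fun x => (σ ^ 2 / 2)⁻¹ * Φ' x, hG''', fun x hx => ?_⟩
  rw [mul_inv_cancel_left₀ hσ2]
  linear_combination (-η) * heq x hx

/-- (Lemma 4.4, differentiation direction.) If `G` is `C²` on
`(−∞, a)`, vanishes at `a⁻`, and satisfies the integro-differential equation
`(σ²/2)G'' + (α+βx)G' + λ∫ₓᵃ G(y) η e^{−η(y−x)} dy − (λ+q)G + λ e^{−η(a−x)} = 0`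
on `(−∞, a)`, then `G` is three times differentiable there and satisfies the
third-order ODE
`(σ²/2)G''' + (α+βx−ησ²/2)G'' + (β−η(α+βx)−λ−q)G' + ηq G = 0`. -/
theorem stmt16 (σ α β lam η q a : ℝ)
    (hσ : 0 < σ) (hlam : 0 < lam) (hη : 0 < η) (hq : 0 ≤ q)
    (G G' G'' : ℝ → ℝ)
    (hG : ∀ x < a, HasDerivAt G (G' x) x)
    (hG' : ∀ x < a, HasDerivAt G' (G'' x) x)
    (hG''c : ContinuousOn G'' (Set.Iio a))
    (hbd : Tendsto G (nhdsWithin a (Set.Iio a)) (nhds 0))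
    (heq : ∀ x < a,
      σ ^ 2 / 2 * G'' x + (α + β * x) * G' x
        + lam * (∫ y in x..a, G y * (η * Real.exp (-(η * (y - x)))))
        - (lam + q) * G x + lam * Real.exp (-(η * (a - x))) = 0) :
    ∃ G''' : ℝ → ℝ, (∀ x < a, HasDerivAt G'' (G''' x) x) ∧
      ∀ x < a,
        σ ^ 2 / 2 * G''' x + (α + β * x - η * σ ^ 2 / 2) * G'' x
          + (β - η * (α + β * x) - lam - q) * G' x + η * q * G x = 0 :=
  stmt16_general σ α β lam η q a hσ G G' G'' hG hG' hbd heq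
end
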